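/- arXiv:2407.16925 — 5 statements merged into one kernel-verified Lean document; each statement's English description precedes it below -/
import Mathlib

section
/- Let A_s, A_i ∈ ℂ^{m×n}, let U_s ∈ ℂ^{m×r} and V_s ∈ ℂ^{n×r} have orthonormal columns (U_sᴴU_s = I_r and V_sᴴV_s = I_r), let Σ ∈ ℂ^{r×r}, and suppose there exist U_i ∈ ℂ^{m×r} and V_i ∈ ℂ^{n×r} such that A_s = U_s Σ V_sᴴ and A_i = U_i Σ V_sᴴ + U_s Σ V_iᴴ. Then (I_m − U_s U_sᴴ) A_i (I_n − V_s V_sᴴ) = 0. -/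
open Matrix

namespace Matrix

variable {m r α : Type*} [Fintype m] [Fintype r] [DecidableEq m] [DecidableEq r] [Ring α]

theorem one_sub_mul_mul_self_of_mul_eq_one {U : Matrix m r α} {W : Matrix r m α}
    (h : W * U = 1) : (1 - U * W) * U = 0 := by
  rw [Matrix.sub_mul, Matrix.one_mul, Matrix.mul_assoc, h, Matrix.mul_one, sub_self]

theorem mul_one_sub_mul_self_of_mul_eq_one {U : Matrix m r α} {W : Matrix r m α}
    (h : W * U = 1) : W * (1 - U * W) = 0 := by
  rw [Matrix.mul_sub, Matrix.mul_one, ← Matrix.mul_assoc, h, Matrix.one_mul, sub_self]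

end Matrix

theorem stmt_0_general (m n r : ℕ)
    (Ai : Matrix (Fin m) (Fin n) ℂ)
    (Us : Matrix (Fin m) (Fin r) ℂ) (Vs : Matrix (Fin n) (Fin r) ℂ)
    (Sg : Matrix (Fin r) (Fin r) ℂ)
    (hU : Usᴴ * Us = 1) (hV : Vsᴴ * Vs = 1)
    (Ui : Matrix (Fin m) (Fin r) ℂ) (Vi : Matrix (Fin n) (Fin r) ℂ)
    (hAi : Ai = Ui * Sg * Vsᴴ + Us * Sg * Viᴴ) :
    (1 - Us * Usᴴ) * Ai * (1 - Vs * Vsᴴ) = 0 := by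
  have hUs : (1 - Us * Usᴴ) * Us = 0 := one_sub_mul_mul_self_of_mul_eq_one hU
  have hVs : Vsᴴ * (1 - Vs * Vsᴴ) = 0 := mul_one_sub_mul_self_of_mul_eq_one hV
  calc (1 - Us * Usᴴ) * Ai * (1 - Vs * Vsᴴ)
      = (1 - Us * Usᴴ) * Ui * Sg * (Vsᴴ * (1 - Vs * Vsᴴ))
        + (1 - Us * Usᴴ) * Us * (Sg * Viᴴ * (1 - Vs * Vsᴴ)) := by
        simp only [hAi, Matrix.mul_add, Matrix.add_mul, Matrix.mul_assoc]
    _ = 0 := by rw [hUs, hVs, Matrix.mul_zero, Matrix.zero_mul, add_zero]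

/-- Necessity direction of Theorem 2.1 (CCDSVD): if the dual matrix
`A = A_s + A_i ε` admits a CCDSVD with standard factors `U_s, Σ, V_s`
(having orthonormal columns), then `(I - U_s U_sᴴ) A_i (I - V_s V_sᴴ) = 0`. -/
theorem stmt_0 (m n r : ℕ)
    (As Ai : Matrix (Fin m) (Fin n) ℂ)
    (Us : Matrix (Fin m) (Fin r) ℂ) (Vs : Matrix (Fin n) (Fin r) ℂ)
    (Sg : Matrix (Fin r) (Fin r) ℂ)
    (hU : Usᴴ * Us = 1) (hV : Vsᴴ * Vs = 1)
    (Ui : Matrix (Fin m) (Fin r) ℂ) (Vi : Matrix (Fin n) (Fin r) ℂ)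
    (hAs : As = Us * Sg * Vsᴴ)
    (hAi : Ai = Ui * Sg * Vsᴴ + Us * Sg * Viᴴ) :
    (1 - Us * Usᴴ) * Ai * (1 - Vs * Vsᴴ) = 0 :=
  stmt_0_general m n r Ai Us Vs Sg hU hV Ui Vi hAi
end

section
/- Let A_i ∈ ℂ^{m×n}, let U_s ∈ ℂ^{m×r} have orthonormal columns (U_sᴴU_s = I_r), let V_s ∈ ℂ^{n×r}, let Σ ∈ ℂ^{r×r} be invertible, and let P ∈ ℂ^{r×r} be skew-Hermitian (Pᴴ = −P). Define U_i := (I_m − U_s U_sᴴ) A_i V_s Σ⁻¹ + U_s P. Then U_sᴴU_i + U_iᴴU_s = 0. -/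
/-! `U_sᴴ` annihilates the projector `I − U_s U_sᴴ`, so `U_sᴴ U_i = P`, and the sum is
`P + Pᴴ = 0`. -/

open Matrix

namespace Matrix

variable {α : Type*} [Ring α] {m r k : Type*} [Fintype m] [Fintype r] [DecidableEq m] [DecidableEq r]

theorem mul_one_sub_mul_eq_zero_of_mul_eq_one {A : Matrix r m α} {B : Matrix m r α}
    (h : A * B = 1) : A * (1 - B * A) = 0 := by
  rw [Matrix.mul_sub, Matrix.mul_one, ← Matrix.mul_assoc, h, Matrix.one_mul, sub_self]

theorem mul_one_sub_mul_mul_add_mul_of_mul_eq_one {A : Matrix r m α} {B : Matrix m r α}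
    (h : A * B = 1) (X : Matrix m k α) (P : Matrix r k α) :
    A * ((1 - B * A) * X + B * P) = P := by
  rw [Matrix.mul_add, ← Matrix.mul_assoc, mul_one_sub_mul_eq_zero_of_mul_eq_one h,
    Matrix.zero_mul, ← Matrix.mul_assoc, h, Matrix.one_mul, zero_add]

end Matrix

theorem stmt_2_general (m n r : ℕ)
    (Ai : Matrix (Fin m) (Fin n) ℂ)
    (Us : Matrix (Fin m) (Fin r) ℂ) (Vs : Matrix (Fin n) (Fin r) ℂ)
    (Sg : Matrix (Fin r) (Fin r) ℂ)
    (hU : Usᴴ * Us = 1)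
    (P : Matrix (Fin r) (Fin r) ℂ) (hP : Pᴴ = -P)
    (Ui : Matrix (Fin m) (Fin r) ℂ)
    (hUi : Ui = (1 - Us * Usᴴ) * Ai * Vs * Sg⁻¹ + Us * P) :
    Usᴴ * Ui + Uiᴴ * Us = 0 := by
  have hUsUi : Usᴴ * Ui = P := by
    rw [hUi, Matrix.mul_assoc _ Ai, Matrix.mul_assoc _ (Ai * Vs)]
    exact mul_one_sub_mul_mul_add_mul_of_mul_eq_one hU _ P
  calc Usᴴ * Ui + Uiᴴ * Us = Usᴴ * Ui + (Usᴴ * Ui)ᴴ := by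
        rw [conjTranspose_mul, conjTranspose_conjTranspose]
    _ = 0 := by rw [hUsUi, hP, add_neg_cancel]

/-- Part of Theorem 2.1 (CCDSVD), left factor: the formula for `U_i` makes
`U = U_s + U_i ε` have unitary columns at first order, i.e.
`U_sᴴU_i + U_iᴴU_s = 0`. -/
theorem stmt_2 (m n r : ℕ)
    (Ai : Matrix (Fin m) (Fin n) ℂ)
    (Us : Matrix (Fin m) (Fin r) ℂ) (Vs : Matrix (Fin n) (Fin r) ℂ)
    (Sg : Matrix (Fin r) (Fin r) ℂ)
    (hU : Usᴴ * Us = 1)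
    (hSg : IsUnit Sg.det)
    (P : Matrix (Fin r) (Fin r) ℂ) (hP : Pᴴ = -P)
    (Ui : Matrix (Fin m) (Fin r) ℂ)
    (hUi : Ui = (1 - Us * Usᴴ) * Ai * Vs * Sg⁻¹ + Us * P) :
    Usᴴ * Ui + Uiᴴ * Us = 0 :=
  stmt_2_general m n r Ai Us Vs Sg hU P hP Ui hUi
end

section
/- Let A_i ∈ ℂ^{m×n}, let U_s ∈ ℂ^{m×r} and V_s ∈ ℂ^{n×r} have orthonormal columns (U_sᴴU_s = I_r and V_sᴴV_s = I_r), let Σ ∈ ℂ^{r×r} be invertible with Σᴴ = Σ, let P ∈ ℂ^{r×r} be arbitrary, and assume (I_m − U_s U_sᴴ) A_i (I_n − V_s V_sᴴ) = 0. Define U_i := (I_m − U_s U_sᴴ) A_i V_s Σ⁻¹ + U_s P and V_i := A_iᴴ U_s Σ⁻¹ − V_s Σ Pᴴ Σ⁻¹. Then A_i = U_i Σ V_sᴴ + U_s Σ V_iᴴ. -/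
/-!
Write `Q = U_s U_sᴴ`. The existence condition `(1 - Q) A_i (1 - V_s V_sᴴ) = 0` says that
`A_i = (1 - Q) A_i V_s V_sᴴ + Q A_i`. Multiplying out, `U_i Σ V_sᴴ` contributes the first
summand plus `U_s P Σ V_sᴴ`, and since `Σ` is Hermitian, `U_s Σ V_iᴴ = U_s (U_sᴴ A_i - P Σ V_sᴴ)`
contributes the second summand minus the same term, so the free parameter `P` cancels.
-/

open Matrix

namespace Matrix

variable {m n K : Type*} [Fintype n] [DecidableEq n]

theorem eq_one_sub_mul_mul_add_of_mul_one_sub_eq_zero [Fintype m] [DecidableEq m] [Ring K]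
    {Q : Matrix m m K} {A : Matrix m n K} {R : Matrix n n K}
    (h : (1 - Q) * A * (1 - R) = 0) : A = (1 - Q) * A * R + Q * A := by
  rw [Matrix.mul_sub, Matrix.mul_one, sub_eq_zero] at h
  rw [← h, Matrix.sub_mul, Matrix.one_mul, sub_add_cancel]

theorem mul_conjTranspose_mul_nonsing_inv [CommRing K] [StarRing K] {S : Matrix n n K}
    (hS : IsUnit S.det) (hSH : Sᴴ = S) (Y : Matrix m n K) : S * (Y * S⁻¹)ᴴ = Yᴴ := by
  rw [conjTranspose_mul, conjTranspose_nonsing_inv, hSH, mul_nonsing_inv_cancel_left _ _ hS]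

end Matrix

theorem stmt_4_general (m n r : ℕ)
    (Ai : Matrix (Fin m) (Fin n) ℂ)
    (Us : Matrix (Fin m) (Fin r) ℂ) (Vs : Matrix (Fin n) (Fin r) ℂ)
    (Sg : Matrix (Fin r) (Fin r) ℂ)
    (hSg : IsUnit Sg.det) (hSgH : Sgᴴ = Sg)
    (P : Matrix (Fin r) (Fin r) ℂ)
    (hcond : (1 - Us * Usᴴ) * Ai * (1 - Vs * Vsᴴ) = 0)
    (Ui : Matrix (Fin m) (Fin r) ℂ) (Vi : Matrix (Fin n) (Fin r) ℂ)
    (hUi : Ui = (1 - Us * Usᴴ) * Ai * Vs * Sg⁻¹ + Us * P)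
    (hVi : Vi = Aiᴴ * Us * Sg⁻¹ - Vs * Sg * Pᴴ * Sg⁻¹) :
    Ai = Ui * Sg * Vsᴴ + Us * Sg * Viᴴ := by
  have hUiSg : Ui * Sg = (1 - Us * Usᴴ) * Ai * Vs + Us * P * Sg := by
    rw [hUi, Matrix.add_mul, nonsing_inv_mul_cancel_right _ _ hSg]
  have hSgVi : Sg * Viᴴ = Usᴴ * Ai - P * Sg * Vsᴴ := by
    rw [hVi, ← Matrix.sub_mul, mul_conjTranspose_mul_nonsing_inv hSg hSgH]
    simp only [conjTranspose_sub, conjTranspose_mul, conjTranspose_conjTranspose, hSgH,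
      Matrix.mul_assoc]
  rw [hUiSg, Matrix.mul_assoc Us Sg, hSgVi]
  conv_lhs => rw [eq_one_sub_mul_mul_add_of_mul_one_sub_eq_zero hcond]
  simp only [Matrix.add_mul, Matrix.mul_sub, Matrix.mul_assoc]
  abel

/-- Reconstruction identity inside Theorem 2.1 (CCDSVD): under the existence
condition, the formulas for `U_i` and `V_i` reconstruct the infinitesimal part:
`A_i = U_i Σ V_sᴴ + U_s Σ V_iᴴ`. -/
theorem stmt_4 (m n r : ℕ)
    (Ai : Matrix (Fin m) (Fin n) ℂ)
    (Us : Matrix (Fin m) (Fin r) ℂ) (Vs : Matrix (Fin n) (Fin r) ℂ)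
    (Sg : Matrix (Fin r) (Fin r) ℂ)
    (hU : Usᴴ * Us = 1) (hV : Vsᴴ * Vs = 1)
    (hSg : IsUnit Sg.det) (hSgH : Sgᴴ = Sg)
    (P : Matrix (Fin r) (Fin r) ℂ)
    (hcond : (1 - Us * Usᴴ) * Ai * (1 - Vs * Vsᴴ) = 0)
    (Ui : Matrix (Fin m) (Fin r) ℂ) (Vi : Matrix (Fin n) (Fin r) ℂ)
    (hUi : Ui = (1 - Us * Usᴴ) * Ai * Vs * Sg⁻¹ + Us * P)
    (hVi : Vi = Aiᴴ * Us * Sg⁻¹ - Vs * Sg * Pᴴ * Sg⁻¹) :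
    Ai = Ui * Sg * Vsᴴ + Us * Sg * Viᴴ :=
  stmt_4_general m n r Ai Us Vs Sg hSg hSgH P hcond Ui Vi hUi hVi
end

section
/- Let A_s, A_i ∈ ℂ^{m×n}, U_s, U_i ∈ ℂ^{m×r}, V_s, V_i ∈ ℂ^{n×r}, Σ ∈ ℂ^{r×r}, Q_s, Q_i ∈ ℂ^{m×ℓ}, and Q̄_s, Q̄_i ∈ ℂ^{m×(m−ℓ)}. Assume Q_sᴴQ_s = I_ℓ, Q̄_sᴴQ̄_s = I_{m−ℓ}, Q_s Q_sᴴ + Q̄_s Q̄_sᴴ = I_m, Q̄_sᴴU_s = 0, Q̄_iᴴU_s + Q̄_sᴴU_i = 0, and Q̄_iᴴA_s + Q̄_sᴴA_i = 0. Define Ū_s := Q_sᴴU_s, Ū_i := Q_iᴴU_s + Q_sᴴU_i, B_i := Q_iᴴA_s + Q_sᴴA_i, E_s := A_s − U_s Σ V_sᴴ, and E_i := A_i − U_i Σ V_sᴴ − U_s Σ V_iᴴ. Then ‖E_i‖_F² = ‖B_i − Ū_i Σ V_sᴴ − Ū_s Σ V_iᴴ − Q_iᴴ E_s‖_F² + ‖Q̄_iᴴ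 E_s‖_F². -/
/-!
Since `Q_s Q_sᴴ + Q̄_s Q̄_sᴴ = I`, the trace formula for the Frobenius norm gives
`‖E_i‖_F² = ‖Q_sᴴ E_i‖_F² + ‖Q̄_sᴴ E_i‖_F²`. Expanding the definitions, `Q_sᴴ E_i` is exactly the
first matrix on the right, while the relations `Q̄ᴴ U = 0` and `Q̄ᴴ A = 0` of dual arithmetic turn
`Q̄_sᴴ E_i` into `-Q̄_iᴴ E_s`.
-/

open Matrix

/-- The Frobenius norm of a complex matrix. -/
noncomputable def frobNorm {m n : ℕ} (M : Matrix (Fin m) (Fin n) ℂ) : ℝ :=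
  Real.sqrt (∑ i, ∑ j, ‖M i j‖ ^ 2)

lemma frobNorm_sq_eq_re_trace {p q : ℕ} (M : Matrix (Fin p) (Fin q) ℂ) :
    frobNorm M ^ 2 = (Mᴴ * M).trace.re := by
  rw [frobNorm, Real.sq_sqrt (by positivity), trace, Finset.sum_comm]
  simp only [diag, mul_apply, conjTranspose_apply, Complex.re_sum]
  refine Finset.sum_congr rfl fun j _ => Finset.sum_congr rfl fun i _ => ?_
  rw [RCLike.star_def, mul_comm, Complex.mul_conj, Complex.ofReal_re, Complex.normSq_eq_norm_sq]

lemma frobNorm_neg {p q : ℕ} (M : Matrix (Fin p) (Fin q) ℂ) : frobNorm (-M) = frobNorm M := by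
  simp [frobNorm]

lemma frobNorm_sq_eq_add_of_mul_conjTranspose_add {p q a b : ℕ}
    (P : Matrix (Fin p) (Fin a) ℂ) (R : Matrix (Fin p) (Fin b) ℂ) (h : P * Pᴴ + R * Rᴴ = 1)
    (E : Matrix (Fin p) (Fin q) ℂ) :
    frobNorm E ^ 2 = frobNorm (Pᴴ * E) ^ 2 + frobNorm (Rᴴ * E) ^ 2 := by
  have hE : Eᴴ * E = (Pᴴ * E)ᴴ * (Pᴴ * E) + (Rᴴ * E)ᴴ * (Rᴴ * E) := by
    calc Eᴴ * E = Eᴴ * (P * Pᴴ + R * Rᴴ) * E := by rw [h, Matrix.mul_one]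
      _ = _ := by
        simp only [conjTranspose_mul, conjTranspose_conjTranspose, Matrix.mul_add,
          Matrix.add_mul, Matrix.mul_assoc]
  simp only [frobNorm_sq_eq_re_trace, hE, trace_add, Complex.add_re]

theorem stmt_11_general (m n r l : ℕ)
    (As Ai : Matrix (Fin m) (Fin n) ℂ)
    (Us Ui : Matrix (Fin m) (Fin r) ℂ)
    (Vs Vi : Matrix (Fin n) (Fin r) ℂ)
    (Sg : Matrix (Fin r) (Fin r) ℂ)
    (Qs Qi : Matrix (Fin m) (Fin l) ℂ)
    (Qbs Qbi : Matrix (Fin m) (Fin (m - l)) ℂ)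
    (hcomplete : Qs * Qsᴴ + Qbs * Qbsᴴ = 1)
    (hQbU : Qbsᴴ * Us = 0)
    (hQbUi : Qbiᴴ * Us + Qbsᴴ * Ui = 0)
    (hQbA : Qbiᴴ * As + Qbsᴴ * Ai = 0)
    (Ubs Ubi : Matrix (Fin l) (Fin r) ℂ)
    (Bi : Matrix (Fin l) (Fin n) ℂ)
    (Es Ei : Matrix (Fin m) (Fin n) ℂ)
    (hUbs : Ubs = Qsᴴ * Us)
    (hUbi : Ubi = Qiᴴ * Us + Qsᴴ * Ui)
    (hBi : Bi = Qiᴴ * As + Qsᴴ * Ai)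
    (hEs : Es = As - Us * Sg * Vsᴴ)
    (hEi : Ei = Ai - Ui * Sg * Vsᴴ - Us * Sg * Viᴴ) :
    frobNorm Ei ^ 2 =
      frobNorm (Bi - Ubi * Sg * Vsᴴ - Ubs * Sg * Viᴴ - Qiᴴ * Es) ^ 2 +
        frobNorm (Qbiᴴ * Es) ^ 2 := by
  have hQs_Ei : Qsᴴ * Ei = Bi - Ubi * Sg * Vsᴴ - Ubs * Sg * Viᴴ - Qiᴴ * Es := by
    subst hEi hBi hUbi hUbs hEs
    simp only [Matrix.mul_sub, Matrix.add_mul, Matrix.mul_assoc]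
    abel
  -- the infinitesimal part of `Q̄ᴴ E = 0` in dual arithmetic
  have hQbs_Ei : Qbsᴴ * Ei = -(Qbiᴴ * Es) := by
    rw [hEi, hEs]
    simp only [Matrix.mul_sub, ← Matrix.mul_assoc, eq_neg_of_add_eq_zero_right hQbA,
      eq_neg_of_add_eq_zero_right hQbUi, hQbU, Matrix.zero_mul, Matrix.neg_mul]
    abel
  rw [frobNorm_sq_eq_add_of_mul_conjTranspose_add Qs Qbs hcomplete Ei, hQs_Ei, hQbs_Ei,
    frobNorm_neg]

/-- Core deterministic Frobenius-norm splitting in the proof of Theorem 4.4: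
`‖E_i‖_F² = ‖B_i − Ū_i Σ V_sᴴ − Ū_s Σ V_iᴴ − Q_iᴴ E_s‖_F² + ‖Q̄_iᴴ E_s‖_F²`. -/
theorem stmt_11 (m n r l : ℕ)
    (As Ai : Matrix (Fin m) (Fin n) ℂ)
    (Us Ui : Matrix (Fin m) (Fin r) ℂ)
    (Vs Vi : Matrix (Fin n) (Fin r) ℂ)
    (Sg : Matrix (Fin r) (Fin r) ℂ)
    (Qs Qi : Matrix (Fin m) (Fin l) ℂ)
    (Qbs Qbi : Matrix (Fin m) (Fin (m - l)) ℂ)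
    (hQs : Qsᴴ * Qs = 1)
    (hQbs : Qbsᴴ * Qbs = 1)
    (hcomplete : Qs * Qsᴴ + Qbs * Qbsᴴ = 1)
    (hQbU : Qbsᴴ * Us = 0)
    (hQbUi : Qbiᴴ * Us + Qbsᴴ * Ui = 0)
    (hQbA : Qbiᴴ * As + Qbsᴴ * Ai = 0)
    (Ubs Ubi : Matrix (Fin l) (Fin r) ℂ)
    (Bi : Matrix (Fin l) (Fin n) ℂ)
    (Es Ei : Matrix (Fin m) (Fin n) ℂ)
    (hUbs : Ubs = Qsᴴ * Us)
    (hUbi : Ubi = Qiᴴ * Us + Qsᴴ * Ui)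
    (hBi : Bi = Qiᴴ * As + Qsᴴ * Ai)
    (hEs : Es = As - Us * Sg * Vsᴴ)
    (hEi : Ei = Ai - Ui * Sg * Vsᴴ - Us * Sg * Viᴴ) :
    frobNorm Ei ^ 2 =
      frobNorm (Bi - Ubi * Sg * Vsᴴ - Ubs * Sg * Viᴴ - Qiᴴ * Es) ^ 2 +
        frobNorm (Qbiᴴ * Es) ^ 2 :=
  stmt_11_general m n r l As Ai Us Ui Vs Vi Sg Qs Qi Qbs Qbi hcomplete hQbU hQbUi hQbA Ubs Ubi Bi Es
    Ei hUbs hUbi hBi hEs hEi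
end

section
/- Let B_i ∈ ℂ^{ℓ×n}, let Ū_s ∈ ℂ^{ℓ×r} and V_s ∈ ℂ^{n×r} have orthonormal columns (Ū_sᴴŪ_s = I_r and V_sᴴV_s = I_r), let Σ ∈ ℂ^{r×r} be invertible with Σᴴ = Σ, and let P ∈ ℂ^{r×r} be arbitrary. Define Ū_i := (I_ℓ − Ū_s Ū_sᴴ) B_i V_s Σ⁻¹ + Ū_s P and V_i := B_iᴴ Ū_s Σ⁻¹ − V_s Σ Pᴴ Σ⁻¹. Then B_i − Ū_i Σ V_sᴴ − Ū_s Σ V_iᴴ = (I_ℓ − Ū_s Ū_sᴴ) B_i (I_n − V_s V_sᴴ). -/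
open Matrix

/-! The CCDSVD corrections are built so that `Ū_i Σ V_sᴴ` contributes
`(I − Ū_s Ū_sᴴ) B_i V_s V_sᴴ` and `Ū_s Σ V_iᴴ` contributes `Ū_s Ū_sᴴ B_i`, while the two
`P`-terms `± Ū_s P Σ V_sᴴ` cancel; the rest of `B_i` is exactly the doubly projected residual. -/

section CCDSVD

variable {l n r R : Type*} [Fintype l] [Fintype r] [DecidableEq r] [CommRing R] [StarRing R]
  (Bi : Matrix l n R) (Ubs : Matrix l r R) (Vs : Matrix n r R) (Sg P : Matrix r r R)

theorem ccdsvd_left_term_mul [Fintype n] [DecidableEq l] (hSg : IsUnit Sg.det) :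
    ((1 - Ubs * Ubsᴴ) * Bi * Vs * Sg⁻¹ + Ubs * P) * Sg * Vsᴴ =
      (1 - Ubs * Ubsᴴ) * Bi * (Vs * Vsᴴ) + Ubs * P * Sg * Vsᴴ := by
  simp only [Matrix.add_mul, Matrix.mul_assoc, Matrix.nonsing_inv_mul_cancel_left _ _ hSg]

theorem ccdsvd_right_term_mul (hSg : IsUnit Sg.det) (hSgH : Sgᴴ = Sg) :
    Ubs * Sg * (Biᴴ * Ubs * Sg⁻¹ - Vs * Sg * Pᴴ * Sg⁻¹)ᴴ =
      Ubs * Ubsᴴ * Bi - Ubs * P * Sg * Vsᴴ := by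
  have hSgInvH : (Sg⁻¹)ᴴ = Sg⁻¹ := by rw [conjTranspose_nonsing_inv, hSgH]
  simp only [conjTranspose_sub, conjTranspose_mul, conjTranspose_conjTranspose, hSgInvH, hSgH,
    Matrix.mul_sub, Matrix.mul_assoc, Matrix.mul_nonsing_inv_cancel_left _ _ hSg]

end CCDSVD

theorem stmt_12_general (l n r : ℕ)
    (Bi : Matrix (Fin l) (Fin n) ℂ)
    (Ubs : Matrix (Fin l) (Fin r) ℂ) (Vs : Matrix (Fin n) (Fin r) ℂ)
    (Sg : Matrix (Fin r) (Fin r) ℂ)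
    (hSg : IsUnit Sg.det) (hSgH : Sgᴴ = Sg)
    (P : Matrix (Fin r) (Fin r) ℂ)
    (Ubi : Matrix (Fin l) (Fin r) ℂ) (Vi : Matrix (Fin n) (Fin r) ℂ)
    (hUbi : Ubi = (1 - Ubs * Ubsᴴ) * Bi * Vs * Sg⁻¹ + Ubs * P)
    (hVi : Vi = Biᴴ * Ubs * Sg⁻¹ - Vs * Sg * Pᴴ * Sg⁻¹) :
    Bi - Ubi * Sg * Vsᴴ - Ubs * Sg * Viᴴ =
      (1 - Ubs * Ubsᴴ) * Bi * (1 - Vs * Vsᴴ) := by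
  rw [hUbi, hVi, ccdsvd_left_term_mul Bi Ubs Vs Sg P hSg,
    ccdsvd_right_term_mul Bi Ubs Vs Sg P hSg hSgH]
  simp only [Matrix.sub_mul, Matrix.mul_sub, Matrix.one_mul, Matrix.mul_one, Matrix.mul_assoc]
  abel

/-- Identity underlying `‖B_i − Ū_i Σ V_sᴴ − Ū_s Σ V_iᴴ‖_F = ‖Û̄_sᴴ B_i V̂_s‖_F`
in the proof of Theorem 4.4: with the CCDSVD formulas for `Ū_i` and `V_i`,
`B_i − Ū_i Σ V_sᴴ − Ū_s Σ V_iᴴ = (I − Ū_s Ū_sᴴ) B_i (I − V_s V_sᴴ)`. -/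
theorem stmt_12 (l n r : ℕ)
    (Bi : Matrix (Fin l) (Fin n) ℂ)
    (Ubs : Matrix (Fin l) (Fin r) ℂ) (Vs : Matrix (Fin n) (Fin r) ℂ)
    (Sg : Matrix (Fin r) (Fin r) ℂ)
    (hU : Ubsᴴ * Ubs = 1) (hV : Vsᴴ * Vs = 1)
    (hSg : IsUnit Sg.det) (hSgH : Sgᴴ = Sg)
    (P : Matrix (Fin r) (Fin r) ℂ)
    (Ubi : Matrix (Fin l) (Fin r) ℂ) (Vi : Matrix (Fin n) (Fin r) ℂ)
    (hUbi : Ubi = (1 - Ubs * Ubsᴴ) * Bi * Vs * Sg⁻¹ + Ubs * P)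
    (hVi : Vi = Biᴴ * Ubs * Sg⁻¹ - Vs * Sg * Pᴴ * Sg⁻¹) :
    Bi - Ubi * Sg * Vsᴴ - Ubs * Sg * Viᴴ =
      (1 - Ubs * Ubsᴴ) * Bi * (1 - Vs * Vsᴴ) :=
  stmt_12_general l n r Bi Ubs Vs Sg hSg hSgH P Ubi Vi hUbi hVi
end
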